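/- arXiv:1202.6152 — 5 statements merged into one kernel-verified Lean document; each statement's English description precedes it below -/
import Mathlib

section
/- Let n ≥ 1, s_L > 0, d > 0, and P ∈ ℝⁿ. Let V : ℝⁿ → ℝⁿ be a smooth ℤⁿ-periodic divergence-free vector field with ∫_{[0,1]ⁿ} V dx = 0, let ū : ℝⁿ → ℝ be a smooth ℤⁿ-periodic function, and suppose H̄ ∈ ℝ satisfies the cell problem −d·s_L·Δū(x) + V(x)·(P + ∇ū(x)) + s_L|P + ∇ū(x)| = H̄ for all x ∈ ℝⁿ. Then H̄ = s_L ∫_{[0,1]ⁿ} |P + ∇ū(x)| dx. -/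
open MeasureTheory Real
open scoped RealInnerProductSpace

noncomputable section

/-- The unit cube `[0,1]ⁿ` in `ℝⁿ`. -/
def cube (n : ℕ) : Set (EuclideanSpace ℝ (Fin n)) :=
  {x | ∀ i, x i ∈ Set.Icc (0:ℝ) 1}

/-- A function on `ℝⁿ` is `ℤⁿ`-periodic if it is invariant under integer translations. -/
def IsZnPeriodic {n : ℕ} {F : Type*} (f : EuclideanSpace ℝ (Fin n) → F) : Prop :=
  ∀ (x : EuclideanSpace ℝ (Fin n)) (z : Fin n → ℤ),
    f (x + (WithLp.equiv 2 (Fin n → ℝ)).symm fun i => (z i : ℝ)) = f x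

/-- The divergence of a vector field: the trace of its Fréchet derivative. -/
def diverg {n : ℕ} (V : EuclideanSpace ℝ (Fin n) → EuclideanSpace ℝ (Fin n))
    (x : EuclideanSpace ℝ (Fin n)) : ℝ :=
  LinearMap.trace ℝ (EuclideanSpace ℝ (Fin n)) (fderiv ℝ V x).toLinearMap

/-- The Laplacian of a scalar function: the divergence of its gradient. -/
def laplacian {n : ℕ} (f : EuclideanSpace ℝ (Fin n) → ℝ)
    (x : EuclideanSpace ℝ (Fin n)) : ℝ :=
  diverg (gradient f) x

local instance (n : ℕ) : PartialOrder (EuclideanSpace ℝ (Fin n)) :=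
  PartialOrder.lift (WithLp.ofLp) (WithLp.ofLp_injective 2)

abbrev E (n : ℕ) := EuclideanSpace ℝ (Fin n)

lemma trace_eq_sum {n : ℕ} (T : E n →L[ℝ] E n) :
    LinearMap.trace ℝ (E n) T.toLinearMap = ∑ i, T (EuclideanSpace.single i 1) i := by
  rw [LinearMap.trace_eq_matrix_trace ℝ (EuclideanSpace.basisFun (Fin n) ℝ).toBasis]
  simp [Matrix.trace, Matrix.diag, LinearMap.toMatrix_apply, EuclideanSpace.basisFun_apply]


def onev (n : ℕ) : E n := (WithLp.equiv 2 (Fin n → ℝ)).symm (fun _ => 1)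

lemma cube_eq_Icc (n : ℕ) : cube n = Set.Icc (0 : E n) (onev n) := by
  ext x
  simp only [cube, onev, Set.mem_setOf_eq, Set.mem_Icc, forall_and]
  exact Iff.rfl



lemma cube_eq_preimage (n : ℕ) :
    cube n = (EuclideanSpace.equiv (Fin n) ℝ) ⁻¹' (Set.Icc (0 : Fin n → ℝ) 1) := by
  ext x
  simp only [cube, Set.mem_setOf_eq, Set.mem_preimage, Set.mem_Icc, Pi.le_def, forall_and]
  exact Iff.rfl

lemma isCompact_cube (n : ℕ) : IsCompact (cube n) := by
  rw [cube_eq_preimage]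
  exact (EuclideanSpace.equiv (Fin n) ℝ).toHomeomorph.isCompact_preimage.2 isCompact_Icc

lemma volume_cube (n : ℕ) : volume (cube n) = 1 := by
  rw [cube_eq_preimage]
  have := (EuclideanSpace.volume_preserving_symm_measurableEquiv_toLp (Fin n)).measure_preimage
    (measurableSet_Icc (a := (0 : Fin n → ℝ)) (b := 1)).nullMeasurableSet
  rw [show ⇑(EuclideanSpace.equiv (Fin n) ℝ) = ⇑(MeasurableEquiv.toLp 2 (Fin n → ℝ)).symm from rfl]
  rw [this, Real.volume_Icc_pi]
  simp

lemma continuous_diverg {n : ℕ} {W : E n → E n} (hW : ContDiff ℝ (⊤:ℕ∞) W) :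
    Continuous (diverg W) := by
  have h : Continuous (fderiv ℝ W) := hW.continuous_fderiv (by simp)
  have h2 : Continuous fun x => ∑ i, fderiv ℝ W x (EuclideanSpace.single i 1) i := by
    apply continuous_finset_sum
    intro i _
    exact (EuclideanSpace.proj i).continuous.comp (h.clm_apply continuous_const)
  convert h2 using 1
  funext x
  exact trace_eq_sum _

lemma integral_diverg_eq_zero {m : ℕ} (W : E (m+1) → E (m+1))
    (hW : ContDiff ℝ (⊤:ℕ∞) W) (hWper : IsZnPeriodic W) :
    ∫ x in cube (m+1), diverg W x = 0 := by
  set eL : E (m+1) ≃L[ℝ] (Fin (m+1) → ℝ) := EuclideanSpace.equiv (Fin (m+1)) ℝ with heL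
  have hdiff : Differentiable ℝ W := hW.differentiable (by simp)
  have key := MeasureTheory.integral_divergence_of_hasFDerivAt_off_countable_of_equiv
    (F := E (m+1)) (E := ℝ) (n := m) eL (fun x y => Iff.rfl)
    (EuclideanSpace.volume_preserving_symm_measurableEquiv_toLp (Fin (m+1)))
    (fun i x => W x i)
    (fun i x => (EuclideanSpace.proj i).comp (fderiv ℝ W x))
    ∅ Set.countable_empty 0 (onev (m+1)) (fun i => zero_le_one)
    (fun i => ((EuclideanSpace.proj i).continuous.comp hW.continuous).continuousOn)
    (fun x _ i => by
      have h := (EuclideanSpace.proj (𝕜 := ℝ) i).hasFDerivAt.comp x (hdiff x).hasFDerivAt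
      exact h)
    (diverg W)
    (fun x => by
      rw [diverg, trace_eq_sum]
      rfl)
    (((continuous_diverg hW).continuousOn).integrableOn_compact
      (by rw [← cube_eq_Icc]; exact isCompact_cube (m+1)))
  rw [← cube_eq_Icc] at key
  rw [key]
  apply Finset.sum_eq_zero
  intro i _
  rw [sub_eq_zero]
  apply MeasureTheory.setIntegral_congr_fun measurableSet_Icc
  intro y _
  show W (eL.symm (i.insertNth (eL (onev (m+1)) i) y)) i = W (eL.symm (i.insertNth (eL 0 i) y)) i
  have h1 : eL (onev (m+1)) i = 1 := rfl
  have h2 : eL (0 : E (m+1)) i = 0 := rfl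
  rw [h1, h2]
  have h3 : Fin.insertNth (α := fun _ => ℝ) i 1 y
      = Fin.insertNth (α := fun _ => ℝ) i 0 y + Pi.single i 1 := by
    ext j
    rcases eq_or_ne j i with rfl | hj
    · simp
    · rcases Fin.exists_succAbove_eq hj with ⟨k, rfl⟩
      simp [Fin.insertNth_apply_succAbove, Pi.single_eq_of_ne (Fin.succAbove_ne i k)]
  rw [h3]
  have h4 : eL.symm (i.insertNth (0:ℝ) y + Pi.single i 1)
      = eL.symm (i.insertNth 0 y) + (WithLp.equiv 2 (Fin (m+1) → ℝ)).symm
        (fun j => ((if j = i then (1:ℤ) else 0 : ℤ) : ℝ)) := by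
    rw [map_add]
    congr 1
    show (WithLp.equiv 2 (Fin (m+1) → ℝ)).symm (Pi.single i 1) = _
    congr 1
    ext j
    rcases eq_or_ne j i with rfl | hj
    · simp
    · simp [Pi.single_eq_of_ne hj, hj]
  rw [h4, hWper _ (fun j => if j = i then (1:ℤ) else 0)]
lemma fderiv_periodic {m : ℕ} {G : Type*} [NormedAddCommGroup G] [NormedSpace ℝ G]
    {f : E m → G} (hd : Differentiable ℝ f) (hf : IsZnPeriodic f) :
    IsZnPeriodic (fderiv ℝ f) := by
  intro x z
  set c : E m := (WithLp.equiv 2 (Fin m → ℝ)).symm fun i => (z i : ℝ) with hc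
  have h1 : HasFDerivAt (fun y : E m => y + c) (ContinuousLinearMap.id ℝ (E m)) x :=
    (hasFDerivAt_id x).add_const c
  have h2 := (hd (x + c)).hasFDerivAt.comp x h1
  rw [ContinuousLinearMap.comp_id] at h2
  have h2' : HasFDerivAt (fun y : E m => f (y + c)) (fderiv ℝ f (x + c)) x := h2
  have h3 : (fun y : E m => f (y + c)) = f := funext fun y => hf y z
  rw [h3] at h2'
  exact h2'.fderiv.symm

lemma contDiff_gradient {m : ℕ} {f : E m → ℝ} (hf : ContDiff ℝ (⊤:ℕ∞) f) :
    ContDiff ℝ (⊤:ℕ∞) (gradient f) := by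
  have h1 : ContDiff ℝ (⊤:ℕ∞) (fderiv ℝ f) := hf.fderiv_right (by exact_mod_cast le_top)
  exact (InnerProductSpace.toDual ℝ (E m)).symm.contDiff.comp h1

lemma gradient_periodic {m : ℕ} {f : E m → ℝ} (hf : ContDiff ℝ (⊤:ℕ∞) f)
    (hper : IsZnPeriodic f) : IsZnPeriodic (gradient f) := by
  intro x z
  show (InnerProductSpace.toDual ℝ (E m)).symm _ = (InnerProductSpace.toDual ℝ (E m)).symm _
  rw [fderiv_periodic (hf.differentiable (by simp)) hper x z]

lemma inner_gradient {m : ℕ} (f : E m → ℝ) (x v : E m) :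
    ⟪gradient f x, v⟫ = fderiv ℝ f x v := by
  rw [gradient]
  exact InnerProductSpace.toDual_symm_apply

lemma clm_apply_eq_sum {m : ℕ} (T : E m →L[ℝ] ℝ) (v : E m) :
    T v = ∑ i, v i * T (EuclideanSpace.single i 1) := by
  have hv := (EuclideanSpace.basisFun (Fin m) ℝ).sum_repr v
  conv_lhs => rw [← hv]
  rw [map_sum]
  congr 1
  ext i
  rw [T.map_smul]
  simp [EuclideanSpace.basisFun_apply, EuclideanSpace.basisFun_repr, smul_eq_mul]

lemma diverg_smul {m : ℕ} (u : E m → ℝ) (V : E m → E m)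
    (hu : ContDiff ℝ (⊤:ℕ∞) u) (hV : ContDiff ℝ (⊤:ℕ∞) V) (x : E m) :
    diverg (fun y => u y • V y) x = u x * diverg V x + ⟪gradient u x, V x⟫ := by
  rw [diverg, fderiv_fun_smul (hu.differentiable (by simp) x)
    (hV.differentiable (by simp) x), trace_eq_sum]
  simp only [ContinuousLinearMap.add_apply, ContinuousLinearMap.coe_smul',
    Pi.smul_apply, ContinuousLinearMap.smulRight_apply, PiLp.add_apply,
    PiLp.smul_apply, smul_eq_mul]
  rw [Finset.sum_add_distrib, ← Finset.mul_sum, diverg, trace_eq_sum,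
    inner_gradient, clm_apply_eq_sum (fderiv ℝ u x) (V x)]
  ring_nf
  congr 1
  apply Finset.sum_congr rfl
  intro i _
  ring
/-- Representation formula -/
theorem effective_hamiltonian_formula
    (n : ℕ) (hn : 1 ≤ n) (sL d : ℝ) (hsL : 0 < sL) (hd : 0 < d)
    (P : EuclideanSpace ℝ (Fin n))
    (V : EuclideanSpace ℝ (Fin n) → EuclideanSpace ℝ (Fin n))
    (hVsmooth : ContDiff ℝ (⊤:ℕ∞) V) (hVper : IsZnPeriodic V)
    (hVdiv : ∀ x, diverg V x = 0)
    (hVmean : (∫ x in cube n, V x) = 0)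
    (ubar : EuclideanSpace ℝ (Fin n) → ℝ)
    (hu : ContDiff ℝ (⊤:ℕ∞) ubar) (huper : IsZnPeriodic ubar)
    (Hbar : ℝ)
    (hcell : ∀ x, -(d * sL) * laplacian ubar x + ⟪V x, P + gradient ubar x⟫
        + sL * ‖P + gradient ubar x‖ = Hbar) :
    Hbar = sL * ∫ x in cube n, ‖P + gradient ubar x‖ := by
  obtain ⟨m, rfl⟩ : ∃ m, n = m + 1 := ⟨n - 1, (Nat.succ_pred_eq_of_pos hn).symm⟩
  set g := gradient ubar with hg
  have hgC : ContDiff ℝ (⊤:ℕ∞) g := contDiff_gradient hu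
  have hgper : IsZnPeriodic g := gradient_periodic hu huper
  have hcubeM : MeasurableSet (cube (m+1)) := by
    rw [cube_eq_preimage]
    exact (EuclideanSpace.equiv (Fin (m+1)) ℝ).continuous.measurable measurableSet_Icc
  have hcubeC : IsCompact (cube (m+1)) := isCompact_cube (m+1)
  -- continuity of pieces
  have hcontΔ : Continuous (laplacian ubar) := continuous_diverg hgC
  have hcontV : Continuous V := hVsmooth.continuous
  have hcontg : Continuous g := hgC.continuous
  have hcontB : Continuous fun x => ⟪V x, P + g x⟫ :=
    hcontV.inner (continuous_const.add hcontg)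
  have hcontC : Continuous fun x => ‖P + g x‖ := (continuous_const.add hcontg).norm
  have hIA : IntegrableOn (fun x => -(d * sL) * laplacian ubar x) (cube (m+1)) :=
    ((hcontΔ.const_smul (-(d*sL))).continuousOn).integrableOn_compact hcubeC
  have hIB : IntegrableOn (fun x => ⟪V x, P + g x⟫) (cube (m+1)) :=
    (hcontB.continuousOn).integrableOn_compact hcubeC
  have hIC : IntegrableOn (fun x => sL * ‖P + g x‖) (cube (m+1)) :=
    ((hcontC.const_smul sL).continuousOn).integrableOn_compact hcubeC
  -- step 1: integrate the cell equation
  have step1 : ∫ x in cube (m+1), (-(d * sL) * laplacian ubar x + ⟪V x, P + g x⟫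
      + sL * ‖P + g x‖) = Hbar := by
    rw [setIntegral_congr_fun hcubeM (g := fun _ => Hbar) (fun x _ => hcell x)]
    rw [setIntegral_const, measureReal_def, volume_cube]
    simp
  have e1 :
      (∫ x in cube (m+1), (-(d * sL) * laplacian ubar x + ⟪V x, P + g x⟫ + sL * ‖P + g x‖)) =
      (∫ x in cube (m+1), (-(d * sL) * laplacian ubar x + ⟪V x, P + g x⟫)) +
      ∫ x in cube (m+1), sL * ‖P + g x‖ := integral_add (hIA.add hIB) hIC
  have e2 :
      (∫ x in cube (m+1), (-(d * sL) * laplacian ubar x + ⟪V x, P + g x⟫)) =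
      (∫ x in cube (m+1), -(d * sL) * laplacian ubar x) +
      ∫ x in cube (m+1), ⟪V x, P + g x⟫ := integral_add hIA hIB
  rw [e1, e2] at step1
  -- laplacian term
  have hΔ : ∫ x in cube (m+1), laplacian ubar x = 0 :=
    integral_diverg_eq_zero g hgC hgper
  have hA : ∫ x in cube (m+1), -(d * sL) * laplacian ubar x = 0 := by
    rw [integral_const_mul, hΔ, mul_zero]
  -- transport term
  have hB : ∫ x in cube (m+1), ⟪V x, P + g x⟫ = 0 := by
    have hsplit : ∀ x, ⟪V x, P + g x⟫ = ⟪P, V x⟫ + diverg (fun y => ubar y • V y) x := by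
      intro x
      rw [inner_add_right, diverg_smul ubar V hu hVsmooth x, hVdiv, mul_zero, zero_add,
        real_inner_comm (V x) P, real_inner_comm (V x) (g x)]
    rw [integral_congr_ae (Filter.Eventually.of_forall fun x => hsplit x)]
    have hIP : IntegrableOn (fun x => ⟪P, V x⟫) (cube (m+1)) :=
      ((continuous_const.inner hcontV).continuousOn).integrableOn_compact hcubeC
    have hIW : IntegrableOn (diverg fun y => ubar y • V y) (cube (m+1)) :=
      ((continuous_diverg (hu.smul hVsmooth)).continuousOn).integrableOn_compact hcubeC
    rw [integral_add hIP hIW]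
    have h1 : ∫ x in cube (m+1), ⟪P, V x⟫ = 0 := by
      rw [integral_inner (hcontV.continuousOn.integrableOn_compact hcubeC) P, hVmean,
        inner_zero_right]
    have h2 : ∫ x in cube (m+1), diverg (fun y => ubar y • V y) x = 0 :=
      integral_diverg_eq_zero _ (hu.smul hVsmooth)
        (fun x z => by simp only [huper x z, hVper x z])
    rw [h1, h2, add_zero]
  rw [hA, hB, zero_add, zero_add, integral_const_mul] at step1
  exact step1.symm

end
end

section
/- Let d ≥ 2, let N be a real d × (d−1) matrix whose columns are orthonormal (i.e. Nᵀ N equals the (d−1) × (d−1) identity matrix), and let M be any real d × d matrix. Then the function δ ↦ √(det( ((I + δM)N)ᵀ · ((I + δM)N) )), where I is the d × d identity matrix, is differentiable at δ = 0 with derivative equal to trace(Nᵀ M N). -/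
open Matrix

/-- Derivative of the determinant at the identity: `trace`. -/
lemma hasDerivAt_det_aux {n : Type*} [Fintype n] [DecidableEq n]
    (g : ℝ → Matrix n n ℝ) (g' : Matrix n n ℝ)
    (hg : ∀ i j, HasDerivAt (fun δ => g δ i j) (g' i j) 0) (h0 : g 0 = 1) :
    HasDerivAt (fun δ => (g δ).det) g'.trace 0 := by
  have key : HasDerivAt (fun δ => (g δ).det)
      (∑ σ : Equiv.Perm n, (Equiv.Perm.sign σ : ℝ) *
        (∑ i, (∏ j ∈ Finset.univ.erase i, g 0 (σ j) j) • g' (σ i) i)) 0 := by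
    simp only [Matrix.det_apply']
    exact HasDerivAt.fun_sum fun σ _ =>
      (HasDerivAt.fun_finsetProd fun i _ => hg (σ i) i).const_mul _
  convert key using 1
  rw [Finset.sum_eq_single (1 : Equiv.Perm n)]
  · simp [h0, Matrix.trace, Matrix.diag]
  · intro σ _ hσ
    have hz : ∀ i : n, (∏ j ∈ Finset.univ.erase i, g 0 (σ j) j) = 0 := by
      intro i
      obtain ⟨j, hj, hji⟩ : ∃ j, σ j ≠ j ∧ j ≠ i := by
        by_contra h
        push_neg at h
        apply hσ
        ext k
        by_contra hk
        have hki : k = i := h k hk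
        by_cases hm : σ (σ k) = σ k
        · exact hk (σ.injective hm)
        · have : σ k = i := h (σ k) hm
          exact hk (this.trans hki.symm)
      rw [Finset.prod_eq_zero (Finset.mem_erase.2 ⟨hji, Finset.mem_univ j⟩)]
      simp [h0, Matrix.one_apply, hj]
    simp [hz]
  · simp

/-- First-order expansion of the area element of a surface patch transported by a linear
flow: if the columns of `N` are orthonormal, then
`δ ↦ √(det(((I+δM)N)ᵀ((I+δM)N)))` has derivative `trace(NᵀMN)` at `δ = 0`
(key computation in Theorem A.1 of the paper). -/
theorem area_element_derivative
    (d : ℕ) (hd : 2 ≤ d)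
    (N : Matrix (Fin d) (Fin (d - 1)) ℝ) (hN : Nᵀ * N = 1)
    (M : Matrix (Fin d) (Fin d) ℝ) :
    HasDerivAt
      (fun δ : ℝ => Real.sqrt ((((1 + δ • M) * N)ᵀ * ((1 + δ • M) * N)).det))
      (Nᵀ * M * N).trace 0 := by
  set B := Nᵀ * Mᵀ * N + Nᵀ * M * N with hB
  set C := Nᵀ * Mᵀ * (M * N) with hC
  have hexp : ∀ δ : ℝ, ((1 + δ • M) * N)ᵀ * ((1 + δ • M) * N)
      = 1 + δ • B + (δ * δ) • C := by
    intro δ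
    simp only [Matrix.transpose_mul, Matrix.transpose_add, Matrix.transpose_one,
      Matrix.transpose_smul, Matrix.add_mul, Matrix.mul_add, Matrix.smul_mul,
      Matrix.mul_smul, Matrix.one_mul, Matrix.mul_one, smul_smul, hB, hC,
      ← Matrix.mul_assoc, hN]
    module
  have hg : ∀ i j, HasDerivAt
      (fun δ : ℝ => (1 + δ • B + (δ * δ) • C : Matrix _ _ ℝ) i j) (B i j) 0 := by
    intro i j
    simp only [Matrix.add_apply, Matrix.smul_apply, smul_eq_mul]
    have h1 : HasDerivAt (fun δ : ℝ => δ * B i j) (B i j) 0 := by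
      simpa using (hasDerivAt_id (0 : ℝ)).mul_const (B i j)
    have h2 : HasDerivAt (fun δ : ℝ => δ * δ * C i j) 0 0 := by
      simpa using ((hasDerivAt_id (0 : ℝ)).mul (hasDerivAt_id (0 : ℝ))).mul_const (C i j)
    simpa using ((hasDerivAt_const (0 : ℝ) ((1 : Matrix _ _ ℝ) i j)).fun_add h1).fun_add h2
  have hdet : HasDerivAt
      (fun δ : ℝ => (1 + δ • B + (δ * δ) • C : Matrix _ _ ℝ).det) B.trace 0 :=
    hasDerivAt_det_aux _ _ hg (by simp)
  have htr : B.trace = 2 * (Nᵀ * M * N).trace := by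
    have h : (Nᵀ * Mᵀ * N).trace = (Nᵀ * M * N).trace := by
      rw [← Matrix.trace_transpose (Nᵀ * M * N)]
      simp [Matrix.transpose_mul, Matrix.mul_assoc]
    rw [hB, Matrix.trace_add, h]; ring
  have hsqrt : HasDerivAt Real.sqrt (1 / (2 * Real.sqrt 1))
      ((fun δ : ℝ => (1 + δ • B + (δ * δ) • C : Matrix _ _ ℝ).det) 0) := by
    simp only [zero_smul, mul_zero, add_zero, Matrix.det_one]
    exact Real.hasDerivAt_sqrt one_ne_zero
  have hcomp := hsqrt.comp 0 hdet
  simp only [Real.sqrt_one, mul_one, htr, Function.comp] at hcomp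
  have hfun : (fun δ : ℝ => Real.sqrt ((((1 + δ • M) * N)ᵀ * ((1 + δ • M) * N)).det))
      = fun δ : ℝ => Real.sqrt ((1 + δ • B + (δ * δ) • C : Matrix _ _ ℝ).det) := by
    funext δ; rw [hexp]
  rw [hfun]
  refine hcomp.congr_deriv ?_
  ring
end

section
/- Let d ≥ 2 and let Q be a real d × d orthogonal matrix (Qᵀ Q = I). Write N for the d × (d−1) matrix formed by the first d−1 columns of Q and ν ∈ ℝᵈ for the last column of Q. Then for every real d × d matrix M, the function δ ↦ √(det( ((I + δM)N)ᵀ · ((I + δM)N) )) is differentiable at δ = 0 with derivative equal to trace(M) − ⟨ν, Mν⟩. -/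
open Matrix Finset

/-- Derivative of `δ ↦ det (1 + δ•B + δ²•C)` at `0` is `trace B`. -/
lemma hasDerivAt_det_one_add {n : Type*} [Fintype n] [DecidableEq n]
    (B C : Matrix n n ℝ) :
    HasDerivAt (fun δ : ℝ => (1 + δ • B + (δ * δ) • C).det) B.trace 0 := by
  have h : ∀ δ : ℝ, (1 + δ • B + (δ * δ) • C).det
      = ∑ σ : Equiv.Perm n, (Equiv.Perm.sign σ : ℝ) *
          ∏ i, ((1 : Matrix n n ℝ) (σ i) i + δ * B (σ i) i + (δ * δ) * C (σ i) i) := by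
    intro δ
    simp [Matrix.det_apply', Matrix.add_apply, Matrix.smul_apply, smul_eq_mul]
  simp only [h]
  have hterm : ∀ σ : Equiv.Perm n,
      HasDerivAt (fun δ : ℝ => (Equiv.Perm.sign σ : ℝ) *
          ∏ i, ((1 : Matrix n n ℝ) (σ i) i + δ * B (σ i) i + (δ * δ) * C (σ i) i))
        ((Equiv.Perm.sign σ : ℝ) *
          ∑ i, (∏ j ∈ univ.erase i, (1 : Matrix n n ℝ) (σ j) j) • B (σ i) i) 0 := by
    intro σ
    refine HasDerivAt.const_mul _ ?_
    have := HasDerivAt.fun_finsetProd (u := (univ : Finset n))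
      (f := fun i δ => (1 : Matrix n n ℝ) (σ i) i + δ * B (σ i) i + (δ * δ) * C (σ i) i)
      (f' := fun i => B (σ i) i) (x := (0:ℝ)) ?_
    · simpa using this
    · intro i _
      have h1 : HasDerivAt (fun δ : ℝ => δ * B (σ i) i) (B (σ i) i) 0 := by
        simpa using (hasDerivAt_id (0:ℝ)).mul_const (B (σ i) i)
      have h2 : HasDerivAt (fun δ : ℝ => (δ * δ) * C (σ i) i) 0 0 := by
        have := ((hasDerivAt_id (0:ℝ)).mul (hasDerivAt_id (0:ℝ))).mul_const (C (σ i) i)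
        simpa using this
      simpa using ((hasDerivAt_const (0:ℝ) ((1 : Matrix n n ℝ) (σ i) i)).fun_add h1).fun_add h2
  have hsum := HasDerivAt.fun_sum (u := (univ : Finset (Equiv.Perm n)))
    (fun σ _ => hterm σ)
  convert hsum using 1
  case e'_4 => rfl
  case e'_5 => rfl
  rw [Finset.sum_eq_single (1 : Equiv.Perm n)]
  · simp only [Matrix.trace, Matrix.diag, Equiv.Perm.sign_one, Units.val_one, Int.cast_one,
      one_mul]
    refine (Finset.sum_congr rfl fun x _ => ?_).symm
    rw [Finset.prod_eq_one fun j _ => by rw [Equiv.Perm.one_apply, Matrix.one_apply_eq],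
      one_smul, Equiv.Perm.one_apply]
  · intro σ _ hσ
    have key : ∀ i : n, ∃ j, j ≠ i ∧ σ j ≠ j := by
      intro i
      by_contra hcon
      push_neg at hcon
      have hi : σ i ≠ i := by
        intro hii
        apply hσ
        ext j
        by_cases hji : j = i
        · simp [hji, hii]
        · simpa using hcon j hji
      exact hi (σ.injective (hcon (σ i) hi))
    have : ∀ i : n, (∏ j ∈ univ.erase i, (1 : Matrix n n ℝ) (σ j) j) = 0 := by
      intro i
      obtain ⟨j, hji, hσj⟩ := key i
      exact Finset.prod_eq_zero (Finset.mem_erase.mpr ⟨hji, Finset.mem_univ j⟩)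
        (Matrix.one_apply_ne hσj)
    simp [this]
  · simp

/-- Splitting off the last index from a sum over `Fin d`. -/
lemma sum_split_last (d : ℕ) (hd : 1 ≤ d) (g : Fin d → ℝ) :
    ∑ j, g j = (∑ j : Fin (d - 1), g (Fin.castLE (Nat.sub_le d 1) j)) + g ⟨d - 1, by omega⟩ := by
  obtain ⟨e, rfl⟩ : ∃ e, d = e + 1 := ⟨d - 1, by omega⟩
  rw [Fin.sum_univ_castSucc]
  rfl

/-- Surface stretch rate formula (Theorem A.1 of the paper) in linear-algebra form:
for an orthogonal matrix `Q` with first `d-1` columns `N` and last column `ν`,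
the area element `δ ↦ √(det(((I+δM)N)ᵀ((I+δM)N)))` has derivative
`trace M − ⟨ν, Mν⟩` at `δ = 0`. -/
theorem surface_stretch_rate_formula
    (d : ℕ) (hd : 2 ≤ d)
    (Q : Matrix (Fin d) (Fin d) ℝ) (hQ : Qᵀ * Q = 1)
    (M : Matrix (Fin d) (Fin d) ℝ)
    (N : Matrix (Fin d) (Fin (d - 1)) ℝ)
    (hN : ∀ (i : Fin d) (j : Fin (d - 1)), N i j = Q i (Fin.castLE (Nat.sub_le d 1) j))
    (ν : Fin d → ℝ)
    (hν : ∀ i : Fin d, ν i = Q i ⟨d - 1, by omega⟩) :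
    HasDerivAt
      (fun δ : ℝ => Real.sqrt ((((1 + δ • M) * N)ᵀ * ((1 + δ • M) * N)).det))
      (M.trace - ν ⬝ᵥ M.mulVec ν) 0 := by
  have hQQ : Q * Qᵀ = 1 := mul_eq_one_comm.mp hQ
  -- N has orthonormal columns
  have hNtN : Nᵀ * N = 1 := by
    ext j k
    have h1 : (Nᵀ * N) j k
        = (Qᵀ * Q) (Fin.castLE (Nat.sub_le d 1) j) (Fin.castLE (Nat.sub_le d 1) k) := by
      simp only [Matrix.mul_apply, Matrix.transpose_apply, hN]
    rw [h1, hQ]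
    by_cases hjk : j = k
    · subst hjk; simp [Matrix.one_apply_eq]
    · rw [Matrix.one_apply_ne hjk, Matrix.one_apply_ne]
      exact fun h => hjk (Fin.castLE_injective _ h)
  set B : Matrix (Fin (d-1)) (Fin (d-1)) ℝ := Nᵀ * (M * N) + Nᵀ * (Mᵀ * N) with hB
  set Cm : Matrix (Fin (d-1)) (Fin (d-1)) ℝ := Nᵀ * (Mᵀ * (M * N)) with hCm
  -- the quadratic expansion of the Gram matrix
  have hA : ∀ δ : ℝ, ((1 + δ • M) * N)ᵀ * ((1 + δ • M) * N) = 1 + δ • B + (δ * δ) • Cm := by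
    intro δ
    rw [hB, hCm]
    simp only [Matrix.transpose_mul, Matrix.transpose_add, Matrix.transpose_one,
      Matrix.transpose_smul, Matrix.mul_add, Matrix.add_mul, Matrix.mul_smul, Matrix.smul_mul,
      Matrix.mul_one, Matrix.one_mul, Matrix.mul_assoc, hNtN, smul_smul]
    module
  -- the key trace identity
  have key : ∀ P : Matrix (Fin d) (Fin d) ℝ,
      (Nᵀ * (P * N)).trace = P.trace - ν ⬝ᵥ P.mulVec ν := by
    intro P
    set g : Fin d → ℝ := fun j => (Qᵀ * (P * Q)) j j with hg
    have step1 : ∀ j : Fin (d-1), (Nᵀ * (P * N)) j j = g (Fin.castLE (Nat.sub_le d 1) j) := by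
      intro j
      simp only [hg, Matrix.mul_apply, Matrix.transpose_apply, hN]
    have step2 : ∑ j, g j = P.trace := by
      have : ∑ j, g j = (Qᵀ * (P * Q)).trace := rfl
      rw [this, Matrix.trace_mul_comm, Matrix.mul_assoc, hQQ, Matrix.mul_one]
    have step3 : g ⟨d - 1, by omega⟩ = ν ⬝ᵥ P.mulVec ν := by
      simp only [hg, Matrix.mul_apply, Matrix.transpose_apply, dotProduct, Matrix.mulVec, hν]
    have hsplit := sum_split_last d (by omega) g
    have : (Nᵀ * (P * N)).trace = ∑ j : Fin (d-1), g (Fin.castLE (Nat.sub_le d 1) j) := by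
      rw [Matrix.trace]
      exact Finset.sum_congr rfl fun j _ => step1 j
    rw [this]
    rw [step2, step3] at hsplit
    linarith
  have htraceB : B.trace = 2 * (M.trace - ν ⬝ᵥ M.mulVec ν) := by
    rw [hB, Matrix.trace_add, key M, key Mᵀ, Matrix.trace_transpose]
    have : ν ⬝ᵥ Mᵀ.mulVec ν = ν ⬝ᵥ M.mulVec ν := by
      rw [Matrix.dotProduct_mulVec, Matrix.vecMul_transpose, dotProduct_comm]
    rw [this]; ring
  -- rewrite the function and differentiate
  have heq : (fun δ : ℝ => Real.sqrt ((((1 + δ • M) * N)ᵀ * ((1 + δ • M) * N)).det))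
      = fun δ : ℝ => Real.sqrt ((1 + δ • B + (δ * δ) • Cm).det) := by
    funext δ; rw [hA δ]
  rw [heq]
  have hdet := hasDerivAt_det_one_add B Cm
  have h0 : ((1 : Matrix (Fin (d-1)) (Fin (d-1)) ℝ) + (0:ℝ) • B + ((0:ℝ) * 0) • Cm).det = 1 := by
    simp
  have hsq : HasDerivAt Real.sqrt (1 / (2 * Real.sqrt 1))
      (((1 : Matrix (Fin (d-1)) (Fin (d-1)) ℝ) + (0:ℝ) • B + ((0:ℝ) * 0) • Cm).det) := by
    rw [h0]; exact Real.hasDerivAt_sqrt one_ne_zero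
  have hcomp := hsq.comp 0 hdet
  have : (1 / (2 * Real.sqrt 1)) * B.trace = M.trace - ν ⬝ᵥ M.mulVec ν := by
    rw [Real.sqrt_one, htraceB]; ring
  rw [this] at hcomp
  exact hcomp
end

section
/- Let c ≤ 0 and define h : ℝ × ℝ → ℝ by h(a, b) = max( (min(a,0))², (max(b,0))² ), and Ĥ : ℝ⁴ → ℝ by Ĥ(p_x⁻, p_x⁺, p_y⁻, p_y⁺) = c · √( h(p_x⁻, p_x⁺) + h(p_y⁻, p_y⁺) ). Then: (i) Ĥ is nondecreasing in p_x⁻ and in p_y⁻ and nonincreasing in p_x⁺ and in p_y⁺ (each variable separately, the others fixed); and (ii) Ĥ is consistent: Ĥ(p, p, q, q) = c·√(p² + q²) for all p, q ∈ ℝ. -/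
/-- The reversed Godunov flux for one coordinate direction (negative-speed case). -/
def h (a b : ℝ) : ℝ := max (min a 0 ^ 2) (max b 0 ^ 2)

/-- The reversed Godunov numerical Hamiltonian for the normal-velocity term `c|p|` with
`c = s_L − d·S ≤ 0`, used in the scheme (Str2) of the paper. -/
noncomputable def Hhat (c pxm pxp pym pyp : ℝ) : ℝ := c * Real.sqrt (h pxm pxp + h pym pyp)

lemma h_anti_left (b : ℝ) : Antitone fun a => h a b := by
  intro a1 a2 hle
  have h1 : min a2 0 ^ 2 ≤ min a1 0 ^ 2 := by
    have h2 : min a1 0 ≤ min a2 0 := min_le_min hle le_rfl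
    have h3 : min a2 0 ≤ 0 := min_le_right _ _
    nlinarith
  exact max_le_max h1 le_rfl

lemma h_mono_right (a : ℝ) : Monotone fun b => h a b := by
  intro b1 b2 hle
  have h1 : max b1 0 ^ 2 ≤ max b2 0 ^ 2 := by
    have h2 : max b1 0 ≤ max b2 0 := max_le_max hle le_rfl
    have h3 : (0:ℝ) ≤ max b1 0 := le_max_right _ _
    nlinarith
  exact max_le_max le_rfl h1

lemma h_self (p : ℝ) : h p p = p ^ 2 := by
  unfold h
  rcases le_total p 0 with hp | hp
  · rw [min_eq_left hp, max_eq_right hp, max_eq_left]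
    nlinarith
  · rw [min_eq_right hp, max_eq_left hp, max_eq_right]
    nlinarith

lemma Hhat_le (c : ℝ) (hc : c ≤ 0) {x y : ℝ} (hxy : x ≤ y) (z : ℝ) :
    c * Real.sqrt (y + z) ≤ c * Real.sqrt (x + z) :=
  mul_le_mul_of_nonpos_left (Real.sqrt_le_sqrt (by linarith)) hc

/-- Monotonicity and consistency of the reversed Godunov numerical Hamiltonian for `c|p|`
with `c ≤ 0` (scheme (Str2) of the paper): it is nondecreasing in `p_x⁻, p_y⁻`,
nonincreasing in `p_x⁺, p_y⁺`, and consistent: `Ĥ(p,p,q,q) = c√(p² + q²)`. -/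
theorem reversed_godunov_flux_monotone_consistent (c : ℝ) (hc : c ≤ 0) :
    (∀ pxp pym pyp : ℝ, Monotone fun pxm => Hhat c pxm pxp pym pyp) ∧
    (∀ pxm pym pyp : ℝ, Antitone fun pxp => Hhat c pxm pxp pym pyp) ∧
    (∀ pxm pxp pyp : ℝ, Monotone fun pym => Hhat c pxm pxp pym pyp) ∧
    (∀ pxm pxp pym : ℝ, Antitone fun pyp => Hhat c pxm pxp pym pyp) ∧
    (∀ p q : ℝ, Hhat c p p q q = c * Real.sqrt (p ^ 2 + q ^ 2)) := by
  refine ⟨?_, ?_, ?_, ?_, ?_⟩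
  · intro pxp pym pyp a1 a2 hle
    exact Hhat_le c hc (h_anti_left pxp hle) _
  · intro pxm pym pyp b1 b2 hle
    exact Hhat_le c hc (h_mono_right pxm hle) _
  · intro pxm pxp pyp a1 a2 hle
    simp only [Hhat]
    have := h_anti_left pyp hle
    exact mul_le_mul_of_nonpos_left (Real.sqrt_le_sqrt (by simp only at this; linarith)) hc
  · intro pxm pxp pym b1 b2 hle
    simp only [Hhat]
    have := h_mono_right pym hle
    exact mul_le_mul_of_nonpos_left (Real.sqrt_le_sqrt (by simp only at this; linarith)) hc
  · intro p q
    simp [Hhat, h_self]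
end

section
/- Let n ≥ 1 and let G : ℝⁿ → ℝ be a measurable function such that G(x + e₁) = G(x) + 1 for all x ∈ ℝⁿ (e₁ the first standard basis vector) and such that x ↦ G(x) − x₁ is bounded on ℝⁿ. Then the function x ↦ 1_{{G(x)<0}} − 1_{{x₁<0}} is integrable on ℝ × [0,1]ⁿ⁻¹ and ∫_{ℝ × [0,1]ⁿ⁻¹} ( 1_{{G(x)<0}} − 1_{{x₁<0}} ) dx = −∫_{[0,1]ⁿ} ⌊G(x)⌋ dx, where ⌊·⌋ is the floor function and 1_E denotes the indicator function of a set E. -/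
open MeasureTheory

private lemma sum_indicator_lt (N : ℤ) (t : ℝ) (h1 : -N ≤ ⌈t⌉) (h2 : ⌈t⌉ ≤ N) :
    ∑ k ∈ Finset.Icc (-N) (N-1), (if (k:ℝ) < t then (1:ℝ) else 0) = ((N + ⌈t⌉ : ℤ) : ℝ) := by
  classical
  rw [Finset.sum_boole]
  have hfilter : (Finset.Icc (-N) (N-1)).filter (fun k : ℤ => ((k:ℝ) < t))
      = Finset.Icc (-N) (⌈t⌉ - 1) := by
    ext k
    simp only [Finset.mem_filter, Finset.mem_Icc, ← Int.lt_ceil]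
    omega
  have h3 : (0:ℤ) ≤ N + ⌈t⌉ := by omega
  have h4 : (⌈t⌉ - 1 + 1 - -N) = N + ⌈t⌉ := by ring
  rw [hfilter, Int.card_Icc, h4]
  exact_mod_cast Int.toNat_of_nonneg h3

private lemma shift_int {n : ℕ} (i0 : Fin n) (G : (Fin n → ℝ) → ℝ)
    (hshift : ∀ x : Fin n → ℝ, G (x + Pi.single i0 1) = G x + 1) :
    ∀ (k : ℤ) (x : Fin n → ℝ), G (x + k • Pi.single i0 1) = G x + k := by
  intro k
  induction k using Int.induction_on with
  | zero => intro x; simp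
  | succ m ih =>
      intro x
      have h1 : x + ((m:ℤ)+1) • Pi.single i0 (1:ℝ)
          = (x + (m:ℤ) • Pi.single i0 1) + Pi.single i0 1 := by
        rw [add_zsmul, one_zsmul]; abel
      rw [h1, hshift, ih]; push_cast; ring
  | pred m ih =>
      intro x
      have h1 : (x + (-(m:ℤ)-1) • Pi.single i0 (1:ℝ)) + Pi.single i0 1
          = x + (-(m:ℤ)) • Pi.single i0 1 := by
        rw [sub_zsmul, neg_zsmul, one_zsmul]; abel
      have h2 := hshift (x + (-(m:ℤ)-1) • Pi.single i0 1)
      rw [h1, ih] at h2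
      push_cast at h2 ⊢
      linarith

private lemma master (n : ℕ) (i0 : Fin n) (G : (Fin n → ℝ) → ℝ) (hmeas : Measurable G)
    (hshift : ∀ x : Fin n → ℝ, G (x + Pi.single i0 1) = G x + 1)
    (C : ℝ) (hbd : ∀ x : Fin n → ℝ, |G x - x i0| ≤ C) :
    IntegrableOn
      (fun x => (if G x < 0 then (1:ℝ) else 0) - (if x i0 < 0 then (1:ℝ) else 0))
      {x : Fin n → ℝ | ∀ i : Fin n, i ≠ i0 → x i ∈ Set.Icc (0:ℝ) 1} volume ∧
    ∫ x in {x : Fin n → ℝ | ∀ i : Fin n, i ≠ i0 → x i ∈ Set.Icc (0:ℝ) 1},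
        ((if G x < 0 then (1:ℝ) else 0) - (if x i0 < 0 then (1:ℝ) else 0))
      = -∫ x in {x : Fin n → ℝ | ∀ i : Fin n, x i ∈ Set.Icc (0:ℝ) 1}, (⌊G x⌋ : ℝ) := by
  classical
  set P : Fin n → ℝ := Pi.single i0 1 with hPdef
  set f : (Fin n → ℝ) → ℝ :=
    fun x => (if G x < 0 then (1:ℝ) else 0) - (if x i0 < 0 then (1:ℝ) else 0) with hf
  set S : Set (Fin n → ℝ) := {x | ∀ i : Fin n, i ≠ i0 → x i ∈ Set.Icc (0:ℝ) 1} with hSdef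
  have hC0 : 0 ≤ C := le_trans (abs_nonneg _) (hbd 0)
  set N : ℤ := ⌈C⌉ + 2 with hN
  have hNC : C + 2 ≤ (N:ℝ) := by
    have := Int.le_ceil C
    push_cast [hN]
    linarith
  have hN1 : 1 ≤ N := by
    have : (0:ℤ) ≤ ⌈C⌉ := Int.ceil_nonneg hC0
    omega
  have hGk : ∀ (k : ℤ) (x : Fin n → ℝ), G (x + k • P) = G x + k := shift_int i0 G hshift
  have hPi0 : ∀ (k : ℤ) (x : Fin n → ℝ), (x + k • P) i0 = x i0 + k := by
    intro k x; simp [hPdef]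
  have hPne : ∀ (k : ℤ) (x : Fin n → ℝ) (i : Fin n), i ≠ i0 → (x + k • P) i = x i := by
    intro k x i hi; simp [hPdef, Pi.single_eq_of_ne hi]
  -- measurability
  have hfm : Measurable f := by
    apply Measurable.sub
    · exact Measurable.ite (hmeas measurableSet_Iio) measurable_const measurable_const
    · exact Measurable.ite ((measurable_pi_apply i0) measurableSet_Iio)
        measurable_const measurable_const
  have hS : MeasurableSet S := by
    have : S = ⋂ i, ⋂ (_ : i ≠ i0), (fun x : Fin n → ℝ => x i) ⁻¹' Set.Icc (0:ℝ) 1 := by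
      ext x; simp [hSdef]
    rw [this]
    exact MeasurableSet.iInter fun i => MeasurableSet.iInter fun _ =>
      (measurable_pi_apply i) measurableSet_Icc
  set T : Set (Fin n → ℝ) := {x | x i0 ∈ Set.Ico (-(N:ℝ)) (N:ℝ)} ∩ S with hTdef
  have hT : MeasurableSet T := (((measurable_pi_apply i0) measurableSet_Ico)).inter hS
  have hTS : T ⊆ S := Set.inter_subset_right
  have hTvol : volume T < ⊤ := by
    have hsub : T ⊆ Set.pi Set.univ
        (fun i => if i = i0 then Set.Ico (-(N:ℝ)) (N:ℝ) else Set.Icc (0:ℝ) 1) := by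
      intro x hx i _
      by_cases h : i = i0
      · subst h; simpa using hx.1
      · simpa [h] using hx.2 i h
    refine lt_of_le_of_lt (measure_mono hsub) ?_
    rw [volume_pi_pi]
    refine ENNReal.prod_lt_top fun i _ => ?_
    by_cases h : i = i0 <;> simp [h, Real.volume_Ico, Real.volume_Icc]
  -- support of f
  have hsupp : ∀ x : Fin n → ℝ, x i0 ∉ Set.Ico (-(N:ℝ)) (N:ℝ) → f x = 0 := by
    intro x hx
    have hb := abs_le.1 (hbd x)
    rw [Set.mem_Ico, not_and_or, not_le, not_lt] at hx
    rcases hx with h | h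
    · have h1 : G x < 0 := by linarith [hb.2]
      have h2 : x i0 < 0 := by linarith
      simp [hf, h1, h2]
    · have h1 : ¬ G x < 0 := by push_neg; linarith [hb.1]
      have h2 : ¬ x i0 < 0 := by push_neg; linarith
      simp [hf, h1, h2]
  have hbound : ∀ x, ‖f x‖ ≤ 2 := by
    intro x
    rw [hf]
    simp only [Real.norm_eq_abs]
    split_ifs <;> norm_num
  have hfT : IntegrableOn f T volume := by
    refine Integrable.mono' (g := fun _ => (2:ℝ)) ?_ hfm.aestronglyMeasurable
      (ae_of_all _ hbound)
    exact integrableOn_const hTvol.ne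
  have hEq : Set.EqOn (T.indicator f) f S := by
    intro x hx
    by_cases hxT : x ∈ T
    · simp [Set.indicator_of_mem hxT]
    · have hx0 : x i0 ∉ Set.Ico (-(N:ℝ)) (N:ℝ) := fun h => hxT ⟨h, hx⟩
      simp [Set.indicator_of_notMem hxT, hsupp x hx0]
  have hint : IntegrableOn f S volume :=
    ((hfT.integrable_indicator hT).integrableOn).congr_fun hEq hS
  have hstep1 : ∫ x in S, f x = ∫ x in T, f x := by
    calc ∫ x in S, f x = ∫ x in S, T.indicator f x := (setIntegral_congr_fun hS hEq).symm
      _ = ∫ x in S ∩ T, f x := setIntegral_indicator hT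
      _ = ∫ x in T, f x := by rw [Set.inter_eq_self_of_subset_right hTS]
  -- the blocks
  set B : ℤ → Set (Fin n → ℝ) := fun k => {x | x i0 ∈ Set.Ico ((k:ℝ)) ((k:ℝ)+1)} ∩ S with hBdef
  have hBmeas : ∀ k, MeasurableSet (B k) :=
    fun k => (((measurable_pi_apply i0) measurableSet_Ico)).inter hS
  have hBT : ∀ k ∈ Finset.Icc (-N) (N-1), B k ⊆ T := by
    intro k hk x hx
    rw [Finset.mem_Icc] at hk
    refine ⟨⟨?_, ?_⟩, hx.2⟩
    · have : ((-N : ℤ) : ℝ) ≤ (k : ℝ) := by exact_mod_cast hk.1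
      have := hx.1.1
      push_cast at *
      linarith
    · have : ((k : ℤ) : ℝ) + 1 ≤ (N : ℝ) := by exact_mod_cast Int.add_one_le_iff.2 (by omega)
      have := hx.1.2
      linarith
  have hTunion : T = ⋃ k ∈ Finset.Icc (-N) (N-1), B k := by
    ext x
    simp only [Set.mem_iUnion, exists_prop]
    constructor
    · rintro ⟨⟨h1, h2⟩, hxS⟩
      refine ⟨⌊x i0⌋, ?_, ⟨⟨Int.floor_le _, by push_cast; exact Int.lt_floor_add_one _⟩, hxS⟩⟩
      rw [Finset.mem_Icc]
      constructor
      · exact Int.le_floor.2 (by push_cast; linarith)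
      · have : ⌊x i0⌋ < N := Int.floor_lt.2 (by push_cast; linarith)
        omega
    · rintro ⟨k, hk, ⟨⟨h1, h2⟩, hxS⟩⟩
      rw [Finset.mem_Icc] at hk
      refine ⟨⟨?_, ?_⟩, hxS⟩
      · have : ((-N : ℤ) : ℝ) ≤ (k : ℝ) := by exact_mod_cast hk.1
        push_cast at *
        linarith
      · have : ((k : ℤ) : ℝ) + 1 ≤ (N : ℝ) := by exact_mod_cast Int.add_one_le_iff.2 (by omega)
        linarith
  have hdisj : Set.Pairwise ↑(Finset.Icc (-N) (N-1)) (Function.onFun Disjoint B) := by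
    intro k _ l _ hkl
    refine Set.disjoint_left.2 fun x hxk hxl => hkl ?_
    have h1 : ⌊x i0⌋ = k := by
      rw [Int.floor_eq_iff]
      exact ⟨hxk.1.1, hxk.1.2⟩
    have h2 : ⌊x i0⌋ = l := by
      rw [Int.floor_eq_iff]
      exact ⟨hxl.1.1, hxl.1.2⟩
    omega
  have hstep2 : ∫ x in T, f x = ∑ k ∈ Finset.Icc (-N) (N-1), ∫ x in B k, f x := by
    rw [hTunion]
    exact integral_biUnion_finset _ (fun k _ => hBmeas k) hdisj
      (fun k hk => hfT.mono_set (hBT k hk))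
  -- translation
  have hBimage : ∀ k : ℤ, B k = (fun x => x + k • P) '' (B 0) := by
    intro k
    ext y
    constructor
    · intro hy
      refine ⟨y - k • P, ⟨⟨?_, ?_⟩, fun i hi => ?_⟩, by simp⟩
      · have : (y - k • P) i0 = y i0 - k := by simp [hPdef]
        rw [this]
        have := hy.1.1
        push_cast
        linarith
      · have : (y - k • P) i0 = y i0 - k := by simp [hPdef]
        rw [this]
        have := hy.1.2
        push_cast
        linarith
      · have : (y - k • P) i = y i := by simp [hPdef, Pi.single_eq_of_ne hi]
        rw [this]
        exact hy.2 i hi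
    · rintro ⟨x, hx, rfl⟩
      show x + k • P ∈ B k
      refine ⟨⟨?_, ?_⟩, fun i hi => ?_⟩
      · rw [hPi0 k x]
        have := hx.1.1
        push_cast at this ⊢
        linarith
      · rw [hPi0 k x]
        have := hx.1.2
        push_cast at this ⊢
        linarith
      · rw [hPne k x i hi]
        exact hx.2 i hi
  have hstep3 : ∀ k : ℤ, ∫ x in B k, f x = ∫ x in B 0, f (x + k • P) := by
    intro k
    rw [hBimage k]
    exact (measurePreserving_add_right volume (k • P)).setIntegral_image_emb
      (MeasurableEquiv.addRight (k • P)).measurableEmbedding f (B 0)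
  have hB0T : B 0 ⊆ T := hBT 0 (by rw [Finset.mem_Icc]; omega)
  have hB0vol : volume (B 0) < ⊤ := lt_of_le_of_lt (measure_mono hB0T) hTvol
  have hintk : ∀ k : ℤ, IntegrableOn (fun x => f (x + k • P)) (B 0) volume := by
    intro k
    refine Integrable.mono' (g := fun _ => (2:ℝ)) (integrableOn_const hB0vol.ne)
      ?_ (ae_of_all _ fun x => hbound _)
    exact (hfm.comp (measurable_add_const (k • P))).aestronglyMeasurable
  have hstep4 : ∑ k ∈ Finset.Icc (-N) (N-1), ∫ x in B 0, f (x + k • P)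
      = ∫ x in B 0, ∑ k ∈ Finset.Icc (-N) (N-1), f (x + k • P) :=
    (integral_finset_sum _ (fun k _ => hintk k)).symm
  -- pointwise evaluation on B 0
  have hpt : ∀ x ∈ B 0, ∑ k ∈ Finset.Icc (-N) (N-1), f (x + k • P) = -(⌊G x⌋ : ℝ) := by
    intro x hx
    have hx0 : (0:ℝ) ≤ x i0 := by
      have := hx.1.1; push_cast at this; linarith
    have hx1 : x i0 < 1 := by
      have := hx.1.2; push_cast at this; linarith
    have hb := abs_le.1 (hbd x)
    have hterm : ∀ k : ℤ, f (x + k • P) =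
        (if ((k:ℝ)) < -G x then (1:ℝ) else 0) - (if ((k:ℝ)) < -(x i0) then (1:ℝ) else 0) := by
      intro k
      rw [hf]
      simp only
      rw [hGk k x, hPi0 k x]
      congr 1
      · exact if_congr (by constructor <;> intro h <;> linarith) rfl rfl
      · exact if_congr (by constructor <;> intro h <;> linarith) rfl rfl
    rw [Finset.sum_congr rfl fun k _ => hterm k, Finset.sum_sub_distrib]
    have hc1a : -N ≤ ⌈-G x⌉ := by
      have : (-(N:ℝ)) ≤ -G x := by linarith [hb.1, hb.2]
      have h := Int.le_ceil (-G x)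
      exact_mod_cast le_trans this h
    have hc1b : ⌈-G x⌉ ≤ N := by
      apply Int.ceil_le.2
      push_cast
      linarith [hb.1]
    have hc2a : -N ≤ ⌈-(x i0)⌉ := by
      have : (-(N:ℝ)) ≤ -(x i0) := by linarith
      have h := Int.le_ceil (-(x i0))
      exact_mod_cast le_trans this h
    have hc2b : ⌈-(x i0)⌉ ≤ N := by
      apply Int.ceil_le.2
      push_cast
      linarith
    rw [sum_indicator_lt N (-G x) hc1a hc1b, sum_indicator_lt N (-(x i0)) hc2a hc2b]
    have hfl : ⌊x i0⌋ = 0 := Int.floor_eq_zero_iff.2 ⟨hx0, hx1⟩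
    rw [Int.ceil_neg, Int.ceil_neg, hfl]
    push_cast
    ring
  have hstep5 : ∫ x in B 0, (∑ k ∈ Finset.Icc (-N) (N-1), f (x + k • P))
      = ∫ x in B 0, -(⌊G x⌋ : ℝ) := setIntegral_congr_fun (hBmeas 0) hpt
  -- from B 0 to the unit cube
  set Q : Set (Fin n → ℝ) := {x | ∀ i : Fin n, x i ∈ Set.Icc (0:ℝ) 1} with hQdef
  have hsub1 : B 0 ⊆ Q := by
    intro x hx i
    by_cases h : i = i0
    · subst h
      have h1 := hx.1.1
      have h2 := hx.1.2
      push_cast at h1 h2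
      exact ⟨by linarith, by linarith⟩
    · exact hx.2 i h
  have hsub2 : Q \ B 0 ⊆ {x : Fin n → ℝ | x i0 = 1} := by
    rintro x ⟨hxQ, hxB⟩
    by_contra h
    apply hxB
    have h1 := hxQ i0
    refine ⟨⟨?_, ?_⟩, fun i _ => hxQ i⟩
    · push_cast; exact h1.1
    · push_cast
      norm_num
      exact lt_of_le_of_ne h1.2 h
  have hnull : volume {x : Fin n → ℝ | x i0 = 1} = 0 := Measure.pi_hyperplane _ i0 1
  have hQB : Q =ᵐ[volume] B 0 := by
    rw [MeasureTheory.ae_eq_set]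
    constructor
    · exact measure_mono_null hsub2 hnull
    · rw [Set.diff_eq_empty.2 hsub1]
      simp
  have hstep6 : ∫ x in B 0, (⌊G x⌋ : ℝ) = ∫ x in Q, (⌊G x⌋ : ℝ) :=
    setIntegral_congr_set hQB.symm
  refine ⟨hint, ?_⟩
  calc ∫ x in S, f x = ∫ x in T, f x := hstep1
    _ = ∑ k ∈ Finset.Icc (-N) (N-1), ∫ x in B k, f x := hstep2
    _ = ∑ k ∈ Finset.Icc (-N) (N-1), ∫ x in B 0, f (x + k • P) := by
        exact Finset.sum_congr rfl fun k _ => hstep3 k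
    _ = ∫ x in B 0, ∑ k ∈ Finset.Icc (-N) (N-1), f (x + k • P) := hstep4
    _ = ∫ x in B 0, -(⌊G x⌋ : ℝ) := hstep5
    _ = -∫ x in B 0, (⌊G x⌋ : ℝ) := integral_neg _
    _ = -∫ x in Q, (⌊G x⌋ : ℝ) := by rw [hstep6]

/-- Passage from formula (Tu4) to formula (Tu5) of the paper: for a level-set function `G`
on `ℝⁿ` with `G(x + e₁) = G(x) + 1` and `G(x) − x₁` bounded, the burned volume relative to
the initial half-space, measured in the strip `ℝ × [0,1]ⁿ⁻¹`, equals minus the integral of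
`⌊G⌋` over the unit cube. -/
theorem burned_volume_eq_neg_integral_floor
    (n : ℕ) (hn : 0 < n)
    (G : (Fin n → ℝ) → ℝ) (hmeas : Measurable G)
    (hshift : ∀ x : Fin n → ℝ, G (x + Pi.single (⟨0, hn⟩ : Fin n) 1) = G x + 1)
    (C : ℝ) (hbd : ∀ x : Fin n → ℝ, |G x - x ⟨0, hn⟩| ≤ C) :
    IntegrableOn
      (fun x => (if G x < 0 then (1:ℝ) else 0) - (if x ⟨0, hn⟩ < 0 then (1:ℝ) else 0))
      {x : Fin n → ℝ | ∀ i : Fin n, i ≠ ⟨0, hn⟩ → x i ∈ Set.Icc (0:ℝ) 1} volume ∧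
    ∫ x in {x : Fin n → ℝ | ∀ i : Fin n, i ≠ ⟨0, hn⟩ → x i ∈ Set.Icc (0:ℝ) 1},
        ((if G x < 0 then (1:ℝ) else 0) - (if x ⟨0, hn⟩ < 0 then (1:ℝ) else 0))
      = -∫ x in {x : Fin n → ℝ | ∀ i : Fin n, x i ∈ Set.Icc (0:ℝ) 1}, (⌊G x⌋ : ℝ) := by
  exact master n ⟨0, hn⟩ G hmeas hshift C hbd
end
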